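/- Let h ≥ 2 and s ≥ 1, set d := k + s − 1 and m := s + h − 1, assume h + d ≤ n, and let λ : {1,…,n} × {0,…,s−1} → F be injective. Fix u ∈ {1,…,h} and let R ⊆ {h+1,…,n} be a set with |R| = d. For a codeword c and indices i ∈ {1,…,n}, a ∈ {0,…,s−1}^n, write σ_c(i,a) := ∑_{j=0}^{s−2} c(i, j+1, a(u, a_u⊕j)) + c(i, s+u−1, a(u, a_u⊕(s−1))). If c and c' are codewords of C(n,k,s,m,λ) such that σ_c(i,a) = σ_{c'}(i,a) for every i ∈ R and every a ∈ {0,…,s−1}^n, then: (1) c(u,b,a) = c'(u,b,a) for every b ∈ {1,…,s−1} ∪ {s+u−1} and every a, and (2) σ_c(i,a) = σ_{c'}(i,a) for every i ∈ {1,…,h}∖{u} and every a. -/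

import Mathlib

/-- The code `C(n,k,s,m,λ)`: an array `c : {1,…,n} × {1,…,m} × {0,…,s-1}^n → F`
(node index `i : Fin n`, block index `b ∈ {1,…,m}` as a natural number,
`a : Fin n → Fin s`) satisfying the parity-check equations
`∑_{i=1}^n λ(i,a_i)^t · c(i,b,a) = 0` for all `t ∈ {0,…,n-k-1}`,
`b ∈ {1,…,m}` and `a ∈ {0,…,s-1}^n`. -/
def IsCodeword {F : Type*} [Field F] {n : ℕ} (k s m : ℕ)
    (lam : Fin n → Fin s → F) (c : Fin n → ℕ → (Fin n → Fin s) → F) : Prop :=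
  ∀ t < n - k, ∀ b ∈ Finset.Icc 1 m, ∀ a : Fin n → Fin s,
    ∑ i, lam i (a i) ^ t * c i b a = 0

/-- The sum `σ_c(i,a) = ∑_{j=0}^{s-2} c(i, j+1, a(w, a_w ⊕ j)) + c(i, bLast, a(w, a_w ⊕ (s-1)))`,
where `w` is the failed node whose digit is rotated, `bLast` the distinguished
block index and `⊕` is addition modulo `s` (`Fin s` addition). -/
def repairSum {F : Type*} [Field F] {n s : ℕ} [NeZero s]
    (c : Fin n → ℕ → (Fin n → Fin s) → F) (w : Fin n) (bLast : ℕ)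
    (i : Fin n) (a : Fin n → Fin s) : F :=
  ∑ j ∈ Finset.range (s - 1), c i (j + 1) (Function.update a w (a w + Fin.ofNat s j))
    + c i bLast (Function.update a w (a w + Fin.ofNat s (s - 1 : ℕ)))

/-- Vandermonde-type linear independence: if `x` is injective on a fintype of
cardinality `N` and `∑ z, x z ^ t * f z = 0` for all `t < N`, then `f = 0`. -/
lemma vand_zero {F : Type*} [Field F] {ι : Type*} [Fintype ι] {N : ℕ}
    (hcard : Fintype.card ι = N) (x f : ι → F) (hx : Function.Injective x)
    (h : ∀ t < N, ∑ z, x z ^ t * f z = 0) : ∀ z, f z = 0 := by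
  obtain e : ι ≃ Fin N := Fintype.equivFinOfCardEq hcard
  have hx' : Function.Injective (x ∘ e.symm) := hx.comp e.symm.injective
  have hmain : (f ∘ e.symm) = 0 := by
    apply Matrix.eq_zero_of_forall_pow_sum_mul_pow_eq_zero (f := x ∘ e.symm) hx'
    intro t
    have h0 := h t.val t.isLt
    have := Equiv.sum_comp e.symm (fun z => x z ^ (t : ℕ) * f z)
    rw [← this] at h0
    calc ∑ j : Fin N, (f ∘ e.symm) j * (x ∘ e.symm) j ^ (t : ℕ)
        = ∑ j : Fin N, (x ∘ e.symm) j ^ (t : ℕ) * (f ∘ e.symm) j := by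
          apply Finset.sum_congr rfl; intro j _; ring
      _ = 0 := h0
  intro z
  have := congrFun hmain (e z)
  simpa using this

/-- first-round recovery at failed node `u` in `C(n,k,s,m,λ)`,
with `h ≥ 2`, `s ≥ 1`, `d := k+s-1`, `m := s+h-1`, `h + d ≤ n`.  The failed
node `u : Fin n` satisfies `(u : ℕ) < h` (0-indexed version of `u ∈ {1,…,h}`),
so the paper's block index `s+u-1` is `s + (u : ℕ)` here; the helper set
`R ⊆ {h+1,…,n}` consists of nodes with index `≥ h` and `|R| = d`.  If
`σ_c(i,a) = ∑_{j=0}^{s-2} c(i,j+1,a(u,a_u⊕j)) + c(i,s+u-1,a(u,a_u⊕(s-1)))`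
agrees with `σ_{c'}(i,a)` for all `i ∈ R`, then (1) the coordinates `(u,b,a)`,
`b ∈ {1,…,s-1} ∪ {s+u-1}`, agree, and (2) `σ_c(i,a) = σ_{c'}(i,a)` for every
other failed node `i` (i.e. `(i : ℕ) < h`, `i ≠ u`). -/
theorem stmt_11 {F : Type*} [Field F] (n k h s : ℕ) [NeZero s]
    (hk : 1 ≤ k) (hh : 2 ≤ h) (hn : h + (k + s - 1) ≤ n)
    (lam : Fin n → Fin s → F)
    (hlam : Function.Injective fun p : Fin n × Fin s => lam p.1 p.2)
    (u : Fin n) (hu : (u : ℕ) < h)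
    (R : Finset (Fin n)) (hR : ∀ i ∈ R, h ≤ (i : ℕ)) (hRcard : R.card = k + s - 1)
    (c c' : Fin n → ℕ → (Fin n → Fin s) → F)
    (hc : IsCodeword k s (s + h - 1) lam c) (hc' : IsCodeword k s (s + h - 1) lam c')
    (heq : ∀ i ∈ R, ∀ a : Fin n → Fin s,
      repairSum c u (s + (u : ℕ)) i a = repairSum c' u (s + (u : ℕ)) i a) :
    (∀ b ∈ Finset.Icc 1 (s - 1) ∪ {s + (u : ℕ)}, ∀ a : Fin n → Fin s,
      c u b a = c' u b a) ∧
    (∀ i : Fin n, (i : ℕ) < h → i ≠ u → ∀ a : Fin n → Fin s,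
      repairSum c u (s + (u : ℕ)) i a = repairSum c' u (s + (u : ℕ)) i a) := by
  have hs : 1 ≤ s := Nat.one_le_iff_ne_zero.mpr (NeZero.ne s)
  -- the difference array
  set dC : Fin n → ℕ → (Fin n → Fin s) → F := fun i b a => c i b a - c' i b a with hdCdef
  have hdC : ∀ t < n - k, ∀ b ∈ Finset.Icc 1 (s + h - 1), ∀ a : Fin n → Fin s,
      ∑ i, lam i (a i) ^ t * dC i b a = 0 := by
    intro t ht b hb a
    have h1 := hc t ht b hb a
    have h2 := hc' t ht b hb a
    calc ∑ i, lam i (a i) ^ t * dC i b a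
        = ∑ i, (lam i (a i) ^ t * c i b a - lam i (a i) ^ t * c' i b a) := by
          apply Finset.sum_congr rfl; intro i _; simp [hdCdef]; ring
      _ = (∑ i, lam i (a i) ^ t * c i b a) - ∑ i, lam i (a i) ^ t * c' i b a :=
          Finset.sum_sub_distrib _ _
      _ = 0 := by rw [h1, h2, sub_zero]
  have hlin : ∀ (i : Fin n) (a : Fin n → Fin s),
      repairSum dC u (s + (u : ℕ)) i a
        = repairSum c u (s + (u : ℕ)) i a - repairSum c' u (s + (u : ℕ)) i a := by
    intro i a
    simp only [repairSum, hdCdef, Finset.sum_sub_distrib]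
    ring
  have huR : u ∉ R := fun hmem => absurd (hR u hmem) (by omega)
  have hσR : ∀ i ∈ R, ∀ a : Fin n → Fin s, repairSum dC u (s + (u : ℕ)) i a = 0 := by
    intro i hi a
    rw [hlin, heq i hi a, sub_self]
  -- the key: for each `a`, all unknowns vanish
  have key : ∀ a : Fin n → Fin s,
      (∀ i : Fin n, i ∉ R → i ≠ u → repairSum dC u (s + (u : ℕ)) i a = 0) ∧
      (∀ j : Fin s, dC u (if (j : ℕ) < s - 1 then (j : ℕ) + 1 else s + (u : ℕ))
        (Function.update a u (a u + j)) = 0) := by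
    intro a
    set S : Finset (Fin n) := Finset.univ \ insert u R with hSdef
    have hSmem : ∀ i : Fin n, i ∈ S ↔ (i ∉ R ∧ i ≠ u) := by
      intro i; simp [hSdef]; tauto
    set x : ↥S ⊕ Fin s → F :=
      Sum.elim (fun i => lam i.1 (a i.1)) (fun j => lam u (a u + j)) with hxdef
    set f : ↥S ⊕ Fin s → F :=
      Sum.elim (fun i => repairSum dC u (s + (u : ℕ)) i.1 a)
        (fun j => dC u (if (j : ℕ) < s - 1 then (j : ℕ) + 1 else s + (u : ℕ))
          (Function.update a u (a u + j))) with hfdef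
    have hScard : S.card = n - (k + s - 1) - 1 := by
      rw [hSdef, Finset.card_sdiff_of_subset (Finset.subset_univ _),
        Finset.card_insert_of_notMem huR, hRcard, Finset.card_univ, Fintype.card_fin]
      omega
    have hcard : Fintype.card (↥S ⊕ Fin s) = n - k := by
      rw [Fintype.card_sum, Fintype.card_coe, Fintype.card_fin, hScard]
      omega
    have hxinj : Function.Injective x := by
      rintro (i1 | j1) (i2 | j2) hz
      · simp only [hxdef, Sum.elim_inl] at hz
        have h2 : ((i1.1 : Fin n), a i1.1) = ((i2.1 : Fin n), a i2.1) := hlam hz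
        have : i1.1 = i2.1 := congrArg Prod.fst h2
        exact congrArg Sum.inl (Subtype.ext this)
      · exfalso
        simp only [hxdef, Sum.elim_inl, Sum.elim_inr] at hz
        have h2 : ((i1.1 : Fin n), a i1.1) = (u, a u + j2) := hlam hz
        have : i1.1 = u := congrArg Prod.fst h2
        exact ((hSmem i1.1).mp i1.2).2 this
      · exfalso
        simp only [hxdef, Sum.elim_inl, Sum.elim_inr] at hz
        have h2 : (u, a u + j1) = ((i2.1 : Fin n), a i2.1) := hlam hz
        have : u = i2.1 := congrArg Prod.fst h2
        exact ((hSmem i2.1).mp i2.2).2 this.symm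
      · simp only [hxdef, Sum.elim_inr] at hz
        have h2 : (u, a u + j1) = (u, a u + j2) := hlam hz
        have h3 : a u + j1 = a u + j2 := congrArg Prod.snd h2
        exact congrArg Sum.inr (add_left_cancel h3)
    have hzero : ∀ t < n - k, ∑ z, x z ^ t * f z = 0 := by
      intro t ht
      -- summand for node i in the combined parity check
      set Q : Fin n → F := fun i =>
        (∑ j ∈ Finset.range (s - 1),
          lam i (Function.update a u (a u + Fin.ofNat s j) i) ^ t
            * dC i (j + 1) (Function.update a u (a u + Fin.ofNat s j)))
        + lam i (Function.update a u (a u + Fin.ofNat s (s - 1 : ℕ)) i) ^ t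
            * dC i (s + (u : ℕ)) (Function.update a u (a u + Fin.ofNat s (s - 1 : ℕ)))
        with hQdef
      have Etot : ∑ i, Q i = 0 := by
        rw [hQdef]
        rw [Finset.sum_add_distrib, Finset.sum_comm]
        have E : ∀ j ∈ Finset.range (s - 1),
            ∑ i, lam i (Function.update a u (a u + Fin.ofNat s j) i) ^ t
              * dC i (j + 1) (Function.update a u (a u + Fin.ofNat s j)) = 0 := by
          intro j hj
          have hj' := Finset.mem_range.mp hj
          exact hdC t ht (j + 1) (Finset.mem_Icc.mpr ⟨by omega, by omega⟩) _
        have Elast : ∑ i, lam i (Function.update a u (a u + Fin.ofNat s (s - 1 : ℕ)) i) ^ t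
            * dC i (s + (u : ℕ)) (Function.update a u (a u + Fin.ofNat s (s - 1 : ℕ))) = 0 :=
          hdC t ht (s + (u : ℕ)) (Finset.mem_Icc.mpr ⟨by omega, by omega⟩) _
        rw [Finset.sum_eq_zero E, Elast, add_zero]
      -- for i ≠ u the summand is λ(i,a_i)^t · σ(i,a)
      have Hsplit : ∀ i : Fin n, i ≠ u →
          Q i = lam i (a i) ^ t * repairSum dC u (s + (u : ℕ)) i a := by
        intro i hi
        rw [hQdef]
        simp only [Function.update_of_ne hi]
        rw [repairSum, mul_add, Finset.mul_sum]
      -- the u-summand matches the Fin s indexed terms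
      have Hu : Q u = ∑ j : Fin s, lam u (a u + j) ^ t * f (Sum.inr j) := by
        set G : ℕ → F := fun m => lam u (a u + Fin.ofNat s m) ^ t
          * dC u (if m < s - 1 then m + 1 else s + (u : ℕ))
            (Function.update a u (a u + Fin.ofNat s m)) with hGdef
        have h1 : ∀ j : Fin s, lam u (a u + j) ^ t * f (Sum.inr j) = G (j : ℕ) := by
          intro j
          simp [hGdef, hfdef, Fin.cast_val_eq_self]
        have hss : s - 1 + 1 = s := by omega
        have hsr := Finset.sum_range_succ G (s - 1)
        rw [hss] at hsr
        have hfin := Fin.sum_univ_eq_sum_range G s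
        calc Q u = ∑ m ∈ Finset.range (s - 1), G m + G (s - 1) := by
              rw [hQdef]
              simp only [Function.update_self, hGdef]
              congr 1
              · apply Finset.sum_congr rfl
                intro m hm
                rw [if_pos (Finset.mem_range.mp hm)]
              · rw [if_neg (lt_irrefl _)]
          _ = ∑ m ∈ Finset.range s, G m := hsr.symm
          _ = ∑ j : Fin s, G (j : ℕ) := hfin.symm
          _ = ∑ j : Fin s, lam u (a u + j) ^ t * f (Sum.inr j) := by
              apply Finset.sum_congr rfl
              intro j _
              exact (h1 j).symm
      -- assemble
      have hsubR : R ⊆ Finset.univ \ {u} := by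
        intro i hi
        rw [Finset.mem_sdiff]
        refine ⟨Finset.mem_univ _, ?_⟩
        simp only [Finset.mem_singleton]
        intro hiu
        exact absurd (hR i hi) (by rw [hiu]; omega)
      have hSS : (Finset.univ \ {u}) \ R = S := by
        rw [hSdef]
        ext i
        simp only [Finset.mem_sdiff, Finset.mem_univ, Finset.mem_singleton,
          Finset.mem_insert, true_and, not_or]
      calc ∑ z, x z ^ t * f z
          = (∑ i ∈ S, lam i (a i) ^ t * repairSum dC u (s + (u : ℕ)) i a)
            + ∑ j : Fin s, lam u (a u + j) ^ t * f (Sum.inr j) := by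
            rw [Fintype.sum_sum_type]
            congr 1
            · rw [← Finset.sum_coe_sort S
                (fun i => lam i (a i) ^ t * repairSum dC u (s + (u : ℕ)) i a)]
              apply Finset.sum_congr rfl
              intro i _
              simp [hxdef, hfdef]
        _ = (∑ i ∈ Finset.univ \ {u},
              lam i (a i) ^ t * repairSum dC u (s + (u : ℕ)) i a) + Q u := by
            rw [← Finset.sum_sdiff hsubR, hSS, Hu]
            have : ∑ i ∈ R, lam i (a i) ^ t * repairSum dC u (s + (u : ℕ)) i a = 0 :=
              Finset.sum_eq_zero (fun i hi => by rw [hσR i hi a, mul_zero])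
            rw [this, add_zero]
        _ = (∑ i ∈ Finset.univ \ {u}, Q i) + Q u := by
            congr 1
            apply Finset.sum_congr rfl
            intro i hi
            have hiu : i ≠ u := by
              rw [Finset.mem_sdiff, Finset.mem_singleton] at hi
              exact hi.2
            rw [Hsplit i hiu]
        _ = ∑ i, Q i := (Finset.sum_eq_sum_sdiff_singleton_add (Finset.mem_univ u) Q).symm
        _ = 0 := Etot
    have hf0 := vand_zero hcard x f hxinj hzero
    constructor
    · intro i hiR hiu
      have := hf0 (Sum.inl ⟨i, (hSmem i).mpr ⟨hiR, hiu⟩⟩)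
      simpa [hfdef] using this
    · intro j
      have := hf0 (Sum.inr j)
      simpa [hfdef] using this
  constructor
  · intro b hb a
    rcases Finset.mem_union.mp hb with hb | hb
    · rw [Finset.mem_Icc] at hb
      have hs2 : 2 ≤ s := by omega
      have hj : b - 1 < s := by omega
      set j : Fin s := ⟨b - 1, hj⟩ with hjdef
      have hkey := (key (Function.update a u (a u - j))).2 j
      rw [Function.update_self, Function.update_idem, sub_add_cancel,
        Function.update_eq_self] at hkey
      have hjval : (j : ℕ) = b - 1 := rfl
      rw [hjval, if_pos (by omega : b - 1 < s - 1)] at hkey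
      have hbb : b - 1 + 1 = b := by omega
      rw [hbb] at hkey
      exact sub_eq_zero.mp hkey
    · rw [Finset.mem_singleton] at hb
      subst hb
      have hj : s - 1 < s := by omega
      set j : Fin s := ⟨s - 1, hj⟩ with hjdef
      have hkey := (key (Function.update a u (a u - j))).2 j
      rw [Function.update_self, Function.update_idem, sub_add_cancel,
        Function.update_eq_self] at hkey
      have hjval : (j : ℕ) = s - 1 := rfl
      rw [hjval, if_neg (lt_irrefl _)] at hkey
      exact sub_eq_zero.mp hkey
  · intro i hih hiu a
    have hiR : i ∉ R := fun hm => absurd (hR i hm) (by omega)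
    have := (key a).1 i hiR hiu
    rw [hlin] at this
    exact sub_eq_zero.mp this
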